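/- Let K be a field with char K ≠ 2, k ∈ K, and ξ ∈ K with ξ ≠ 0. Suppose (y₀,z₀) ∈ K² is a point with F(ξ,y₀,z₀) = F_y(ξ,y₀,z₀) = F_z(ξ,y₀,z₀) = 0 where F(x,y,z) = x² + y² + z² + x²y²z² + k·x·y·z. Then (2ξ² - kξ - 2)(2ξ² - kξ + 2)(2ξ² + kξ - 2)(2ξ² + kξ + 2) = 0; equivalently, k = ±2(ξ ± ξ⁻¹) for some choice of signs. -/

import Mathlib

/-!
At a singular point `(y, z)` of the fiber over `x ≠ 0`, the combinations `y F_y - z F_z` and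
`F - y F_y` give `y² = z²` and `y² z² = 1`. Hence `t = yz` and `s = z²` are signs, and `y F_y = 0`
becomes `2x² + t k x + 2s = 0`, which makes one of the four factors vanish.
-/

/-- The defining polynomial of the affine surface `W_k`. -/
def Fpoly {K : Type*} [Field K] (k x y z : K) : K :=
  x ^ 2 + y ^ 2 + z ^ 2 + x ^ 2 * y ^ 2 * z ^ 2 + k * x * y * z

/-- `∂F/∂y`. -/
def Fy {K : Type*} [Field K] (k x y z : K) : K :=
  2 * y + 2 * x ^ 2 * y * z ^ 2 + k * x * z

/-- `∂F/∂z`. -/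
def Fz {K : Type*} [Field K] (k x y z : K) : K :=
  2 * z + 2 * x ^ 2 * y ^ 2 * z + k * x * y

theorem mul_mul_mul_eq_zero_of_add_signs_eq_zero {R : Type*} [CommRing R] {a b c t s : R}
    (ht : t = 1 ∨ t = -1) (hs : s = 1 ∨ s = -1) (h : a + t * b + s * c = 0) :
    (a - b - c) * (a - b + c) * (a + b - c) * (a + b + c) = 0 := by
  rcases ht with rfl | rfl <;> rcases hs with rfl | rfl
  · linear_combination (a - b - c) * (a - b + c) * (a + b - c) * h
  · linear_combination (a - b - c) * (a - b + c) * (a + b + c) * h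
  · linear_combination (a - b - c) * (a + b - c) * (a + b + c) * h
  · linear_combination (a - b + c) * (a + b - c) * (a + b + c) * h

section SingularPoint

variable {K : Type*} [Field K] {k x y z : K}

theorem sq_eq_sq_of_Fy_eq_zero_of_Fz_eq_zero (h2 : (2 : K) ≠ 0) (hFy : Fy k x y z = 0)
    (hFz : Fz k x y z = 0) : y ^ 2 = z ^ 2 := by
  unfold Fy Fz at *
  have h : 2 * (y ^ 2 - z ^ 2) = 0 := by linear_combination y * hFy - z * hFz
  simpa [h2, sub_eq_zero] using h

theorem sq_mul_sq_eq_one_of_Fpoly_eq_zero (hx : x ≠ 0) (hF : Fpoly k x y z = 0)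
    (hFy : Fy k x y z = 0) (hyz : y ^ 2 = z ^ 2) : y ^ 2 * z ^ 2 = 1 := by
  unfold Fpoly Fy at *
  have h : x ^ 2 * (1 - y ^ 2 * z ^ 2) = 0 := by linear_combination hF - y * hFy + hyz
  linear_combination -(mul_eq_zero.mp h).resolve_left (pow_ne_zero 2 hx)

theorem add_mul_add_mul_eq_zero_of_Fy_eq_zero (hFy : Fy k x y z = 0) (hyz : y ^ 2 = z ^ 2)
    (h1 : y ^ 2 * z ^ 2 = 1) : 2 * x ^ 2 + (y * z) * (k * x) + z ^ 2 * 2 = 0 := by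
  unfold Fy at hFy
  linear_combination y * hFy - 2 * hyz - 2 * x ^ 2 * h1

end SingularPoint

/-- If the fiber of `W_k` over `x = ξ ≠ 0` has a singular point, then
`(2ξ² - kξ - 2)(2ξ² - kξ + 2)(2ξ² + kξ - 2)(2ξ² + kξ + 2) = 0`. -/
theorem stmt_7 {K : Type*} [Field K] (h2 : (2 : K) ≠ 0) (k ξ : K) (hξ : ξ ≠ 0)
    (y₀ z₀ : K) (hF : Fpoly k ξ y₀ z₀ = 0) (hFy : Fy k ξ y₀ z₀ = 0)
    (hFz : Fz k ξ y₀ z₀ = 0) :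
    (2 * ξ ^ 2 - k * ξ - 2) * (2 * ξ ^ 2 - k * ξ + 2) *
      (2 * ξ ^ 2 + k * ξ - 2) * (2 * ξ ^ 2 + k * ξ + 2) = 0 := by
  have hyz := sq_eq_sq_of_Fy_eq_zero_of_Fz_eq_zero h2 hFy hFz
  have h1 := sq_mul_sq_eq_one_of_Fpoly_eq_zero hξ hF hFy hyz
  refine mul_mul_mul_eq_zero_of_add_signs_eq_zero (t := y₀ * z₀) (s := z₀ ^ 2) ?_ ?_
    (add_mul_add_mul_eq_zero_of_Fy_eq_zero hFy hyz h1)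
  · exact sq_eq_one_iff.mp (by linear_combination h1)
  · exact sq_eq_one_iff.mp (by linear_combination h1 - z₀ ^ 2 * hyz)
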